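/- Let N_u and N_v be nonempty finite subsets of a type V with |N_u| ≤ |N_v|. Then ∑_{w ∈ V} |[w ∈ N_u]/|N_u| − [w ∈ N_v]/|N_v|| ≤ 2·(|N_u \ N_v|/|N_u| + |N_v \ N_u|/|N_v|), where [·] denotes the 0-1 indicator and the sum is over all w in the (finite) ambient set. -/
import Mathlib

open Finset

theorem indicator_distribution_diff_bound {V : Type*} [Fintype V] [DecidableEq V]
    (Nu Nv : Finset V) (hu : Nu.Nonempty) (hv : Nv.Nonempty)
    (hcard : Nu.card ≤ Nv.card) :
    ∑ w : V, |(if w ∈ Nu then (1 : ℝ) else 0) / Nu.card -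
        (if w ∈ Nv then (1 : ℝ) else 0) / Nv.card| ≤
      2 * (((Nu \ Nv).card : ℝ) / Nu.card + ((Nv \ Nu).card : ℝ) / Nv.card) := by
  have ha : (0:ℝ) < Nu.card := by exact_mod_cast hu.card_pos
  have hb : (0:ℝ) < Nv.card := by exact_mod_cast hv.card_pos
  have hab : (Nu.card:ℝ) ≤ (Nv.card:ℝ) := by exact_mod_cast hcard
  have hba : (1:ℝ)/Nv.card ≤ 1/Nu.card := one_div_le_one_div_of_le ha hab
  have key : ∀ w : V, |(if w ∈ Nu then (1 : ℝ) else 0) / Nu.card -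
        (if w ∈ Nv then (1 : ℝ) else 0) / Nv.card|
      = (if w ∈ Nu ∩ Nv then 1/(Nu.card:ℝ) - 1/Nv.card else 0)
        + (if w ∈ Nu \ Nv then 1/(Nu.card:ℝ) else 0)
        + (if w ∈ Nv \ Nu then 1/(Nv.card:ℝ) else 0) := by
    intro w
    by_cases h1 : w ∈ Nu <;> by_cases h2 : w ∈ Nv
    · simp [h1, h2, abs_of_nonneg (sub_nonneg.mpr hba)]
      exact inv_anti₀ ha hab
    · simp [h1, h2, abs_of_nonneg (one_div_nonneg.mpr ha.le)]
    · simp [h1, h2, abs_of_nonneg (one_div_nonneg.mpr hb.le)]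
    · simp [h1, h2]
  rw [Finset.sum_congr rfl (fun w _ => key w)]
  rw [Finset.sum_add_distrib, Finset.sum_add_distrib]
  simp only [Finset.sum_ite_mem, Finset.univ_inter, Finset.sum_const, nsmul_eq_mul]
  have h1 : (Nu ∩ Nv).card + (Nu \ Nv).card = Nu.card :=
    Finset.card_inter_add_card_sdiff Nu Nv
  have h2 : (Nu ∩ Nv).card + (Nv \ Nu).card = Nv.card := by
    rw [Finset.inter_comm]; exact Finset.card_inter_add_card_sdiff Nv Nu
  have h1' : ((Nu ∩ Nv).card : ℝ) + (Nu \ Nv).card = Nu.card := by exact_mod_cast h1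
  have h2' : ((Nu ∩ Nv).card : ℝ) + (Nv \ Nu).card = Nv.card := by exact_mod_cast h2
  set i := ((Nu ∩ Nv).card : ℝ)
  set s := ((Nu \ Nv).card : ℝ)
  set t := ((Nv \ Nu).card : ℝ)
  have hs : (0:ℝ) ≤ s / Nu.card := by positivity
  have hia : i * (1/(Nu.card:ℝ)) = 1 - s / Nu.card := by
    field_simp; linarith
  have hib : i * (1/(Nv.card:ℝ)) = 1 - t / Nv.card := by
    field_simp; linarith
  have hsa : s * (1/(Nu.card:ℝ)) = s / Nu.card := by ring
  have htb : t * (1/(Nv.card:ℝ)) = t / Nv.card := by ring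
  rw [mul_sub, hia, hib, hsa, htb]
  linarith
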